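/- arXiv:1706.08117 — 2 statements merged into one kernel-verified Lean document; each statement's English description precedes it below -/
import Mathlib

section
/- Let (X_t)_{t≥0} be a trajectory of the 3-color firefly cellular automaton on ℤ: X_{t+1}(v) = X_t(v) if X_t(v) = 2 and some neighbor u ∈ {v−1, v+1} has X_t(u) = 1, and X_{t+1}(v) = X_t(v) + 1 (mod 3) otherwise. Then for all t ≥ 1 and all x ∈ ℤ, the color triple (X_t(x−1), X_t(x), X_t(x+1)) is neither (1,2,0) nor (0,2,1). -/
/-! A site can only show `0` after showing `2` with no blinking neighbor, and it can only
show `2` after showing `1` or after being held by a blinking neighbor. So if `(1, 2, 0)`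
appears at time `t + 1`, the right site was `2` and unheld at time `t`, so the middle one
did not blink; hence it was `2` and held by its left neighbor, which then blinked at
time `t`; but a blinking site shows `2` one step later, not `1`. The pattern `(0, 2, 1)`
is its mirror image. -/

/-- One synchronous step of the 3-color firefly cellular automaton on `ℤ`:
a site keeps its color iff it has color `2` and a neighbor has color `1`;
otherwise it advances its color by `1 (mod 3)`. -/
def fcaStep (c : ℤ → ZMod 3) : ℤ → ZMod 3 := fun v =>
  if c v = 2 ∧ (c (v - 1) = 1 ∨ c (v + 1) = 1) then c v else c v + 1

lemma fcaStep_of_ne_two {c : ℤ → ZMod 3} {v : ℤ} (h : c v ≠ 2) : fcaStep c v = c v + 1 := by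
  simp [fcaStep, h]

lemma fcaStep_of_eq_one {c : ℤ → ZMod 3} {v : ℤ} (h : c v = 1) : fcaStep c v = 2 := by
  rw [fcaStep_of_ne_two (by rw [h]; decide), h]
  rfl

lemma eq_two_of_fcaStep_eq_zero {c : ℤ → ZMod 3} {v : ℤ} (h : fcaStep c v = 0) :
    c v = 2 ∧ c (v - 1) ≠ 1 ∧ c (v + 1) ≠ 1 := by
  unfold fcaStep at h
  split_ifs at h with hheld
  · exact absurd (hheld.1.symm.trans h) (by decide)
  · have hc : c v = 2 := by rw [eq_sub_of_add_eq h]; decide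
    exact ⟨hc, by simp_all⟩

lemma fcaStep_eq_two_cases {c : ℤ → ZMod 3} {v : ℤ} (h : fcaStep c v = 2) :
    c v = 1 ∨ c v = 2 ∧ (c (v - 1) = 1 ∨ c (v + 1) = 1) := by
  unfold fcaStep at h
  split_ifs at h with hheld
  · exact Or.inr hheld
  · exact Or.inl (by rw [eq_sub_of_add_eq h]; decide)

lemma fcaStep_comp_neg (c : ℤ → ZMod 3) (v : ℤ) :
    fcaStep (fun w => c (-w)) v = fcaStep c (-v) := by
  simp only [fcaStep, neg_sub', sub_neg_eq_add, neg_add', or_comm]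

lemma fcaStep_triple_ne_one_two_zero (c : ℤ → ZMod 3) (x : ℤ) :
    (fcaStep c (x - 1), fcaStep c x, fcaStep c (x + 1)) ≠ ((1 : ZMod 3), 2, 0) := by
  simp only [ne_eq, Prod.mk.injEq, not_and]
  intro hleft hmid hright
  obtain ⟨hr, hx, -⟩ := eq_two_of_fcaStep_eq_zero hright
  rw [add_sub_cancel_right] at hx
  rcases fcaStep_eq_two_cases hmid with hx' | ⟨-, hl | hr'⟩
  · exact hx hx'
  · exact absurd ((fcaStep_of_eq_one hl).symm.trans hleft) (by decide)
  · exact absurd (hr.symm.trans hr') (by decide)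

lemma fcaStep_triple_ne_zero_two_one (c : ℤ → ZMod 3) (x : ℤ) :
    (fcaStep c (x - 1), fcaStep c x, fcaStep c (x + 1)) ≠ ((0 : ZMod 3), 2, 1) := by
  have := fcaStep_triple_ne_one_two_zero (fun w => c (-w)) (-x)
  simp only [fcaStep_comp_neg, neg_sub', neg_add', neg_neg, sub_neg_eq_add, ne_eq,
    Prod.mk.injEq] at this ⊢
  tauto

/-- along any FCA trajectory on `ℤ`, for every `t ≥ 1` and every
site `x`, the color triple at `(x-1,x,x+1)` is neither `(1,2,0)` nor `(0,2,1)`. -/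
theorem stmt_10 (X : ℕ → ℤ → ZMod 3)
    (hX : ∀ t v, X (t + 1) v = fcaStep (X t) v) :
    ∀ t : ℕ, 1 ≤ t → ∀ x : ℤ,
      (X t (x - 1), X t x, X t (x + 1)) ≠ ((1 : ZMod 3), 2, 0) ∧
      (X t (x - 1), X t x, X t (x + 1)) ≠ ((0 : ZMod 3), 2, 1) := by
  intro t ht x
  obtain ⟨s, rfl⟩ : ∃ s, t = s + 1 := ⟨t - 1, by omega⟩
  simp only [hX]
  exact ⟨fcaStep_triple_ne_one_two_zero (X s) x, fcaStep_triple_ne_zero_two_one (X s) x⟩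
end

section
/- Random walk hitting time theorem: let S_t = k + Σ_{j=1}^t ξ_j where (ξ_j) are i.i.d. integer-valued with P(ξ_j ≥ −1) = 1 (downward skip-free), and k ≥ 0. Let T = inf{s ≥ 1 : S_s = −1} be the first passage time to level −1. Then for every t ≥ 1, P(T = t) = ((k+1)/t) · P(S_t = −1). -/
open MeasureTheory ProbabilityTheory
open scoped BigOperators ENNReal NNReal

namespace Stmt16Aux

lemma skipfree (W : ℕ → ℤ) (hstep : ∀ n, W n - 1 ≤ W (n + 1)) (c : ℤ) (r N : ℕ)
    (hr : c < W r) (hne : ∀ n, r < n → n < N → W n ≠ c) :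
    ∀ n, r ≤ n → n < N → c < W n := by
  intro n hrn
  induction n, hrn using Nat.le_induction with
  | base => intro _; exact hr
  | succ n hn ih =>
    intro hN
    have h1 : c < W n := ih (by omega)
    have h2 := hstep n
    have h3 := hne (n + 1) (by omega) hN
    omega

lemma sum_window (t : ℕ) (y : ℕ → ℤ) (hper : ∀ i, y (i + t) = y i) :
    ∀ n, ∑ i ∈ Finset.range t, y (n + i) = ∑ i ∈ Finset.range t, y i := by
  intro n
  induction n with
  | zero => simp
  | succ n ih =>
    cases t with
    | zero => simp
    | succ t' =>
      rw [Finset.sum_range_succ]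
      rw [Finset.sum_range_succ'] at ih
      have h1 : ∀ i, y (n + 1 + i) = y (n + (i + 1)) := fun i => by ring_nf
      have h2 : y (n + 1 + t') = y (n + 0) := by
        have h3 : n + 1 + t' = (n + 0) + (t' + 1) := by ring
        rw [h3, hper]
      calc (∑ i ∈ Finset.range t', y (n + 1 + i)) + y (n + 1 + t')
          = (∑ i ∈ Finset.range t', y (n + (i + 1))) + y (n + 0) := by
            rw [h2]; congr 1; exact Finset.sum_congr rfl fun i _ => h1 i
        _ = ∑ i ∈ Finset.range (t' + 1), y i := ih

open Classical in
lemma cycle_count (t m : ℕ) (ht : 0 < t) (hm : 0 < m) (y : ℕ → ℤ)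
    (hy : ∀ i, -1 ≤ y i) (hper : ∀ i, y (i + t) = y i)
    (hsum : ∑ i ∈ Finset.range t, y i = -(m : ℤ)) :
    ((Finset.range t).filter
        (fun r => ∀ s ∈ Finset.Icc 1 (t - 1),
          (∑ i ∈ Finset.range s, y (r + i)) ≠ -(m : ℤ))).card = m := by
  classical
  set W : ℕ → ℤ := fun n => ∑ i ∈ Finset.range n, y i with hWdef
  have hW0 : W 0 = 0 := by simp [hWdef]
  have hWsucc : ∀ n, W (n + 1) = W n + y n := fun n => Finset.sum_range_succ y n
  have hstep : ∀ n, W n - 1 ≤ W (n + 1) := fun n => by have := hy n; rw [hWsucc]; omega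
  have hshift : ∀ r s, W (r + s) = W r + ∑ i ∈ Finset.range s, y (r + i) := fun r s => by
    simp only [hWdef]; rw [Finset.sum_range_add]
  have hWt : ∀ n, W (n + t) = W n - m := fun n => by
    rw [hshift n t, sum_window t y hper n, hsum]; ring
  have hWq : ∀ q, W (q * t) = -((q : ℤ) * m) := by
    intro q
    induction q with
    | zero => simpa using hW0
    | succ q ih =>
      have : (q + 1) * t = q * t + t := by ring
      rw [this, hWt, ih]; push_cast; ring
  have hexAll : ∀ v : ℤ, ∃ n, W n ≤ v := by
    intro v
    rcases le_or_gt 0 v with h | h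
    · exact ⟨0, by omega⟩
    · refine ⟨v.natAbs * t, ?_⟩
      rw [hWq]
      have h1 : (v.natAbs : ℤ) = -v := by omega
      have h2 : (v.natAbs : ℤ) * 1 ≤ (v.natAbs : ℤ) * m := by
        apply mul_le_mul_of_nonneg_left _ (by positivity)
        exact_mod_cast hm
      omega
  set hit : ℤ → ℕ := fun v => Nat.find (hexAll v) with hhit
  have hit_le : ∀ v, W (hit v) ≤ v := fun v => Nat.find_spec (hexAll v)
  have hit_min : ∀ v j, j < hit v → v < W j := by
    intro v j hj
    have := Nat.find_min (hexAll v) hj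
    omega
  have hit_eq : ∀ v : ℤ, v ≤ 0 → W (hit v) = v := by
    intro v hv
    rcases Nat.eq_zero_or_eq_succ_pred (hit v) with h0 | h1
    · have := hit_le v; rw [h0] at this; rw [h0]; omega
    · have hlt : hit v - 1 < hit v := by omega
      have h2 := hit_min v _ hlt
      have h3 := hstep (hit v - 1)
      have h4 : hit v - 1 + 1 = hit v := by omega
      rw [h4] at h3
      have := hit_le v
      omega
  obtain ⟨j₀, hj₀t, hj₀min⟩ : ∃ j₀, j₀ < t ∧ ∀ j, j < t → W j₀ ≤ W j := by
    obtain ⟨j₀, hj₀, hmin⟩ :=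
      Finset.exists_min_image (Finset.range t) W ⟨0, Finset.mem_range.2 ht⟩
    exact ⟨j₀, Finset.mem_range.1 hj₀, fun j hj => hmin j (Finset.mem_range.2 hj)⟩
  set μ : ℤ := W j₀ with hμdef
  have hμ0 : μ ≤ 0 := by have := hj₀min 0 ht; omega
  set R : Finset ℕ :=
    (Finset.Ico t (2 * t)).filter (fun n => ∀ j ∈ Finset.range n, W n < W j) with hR
  have hcardR : R.card = m := by
    have : R.card = (Finset.Ico (μ - m) μ).card := by
      apply Finset.card_bij' (fun n _ => W n) (fun v _ => hit v)
      · intro n hn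
        rw [hR, Finset.mem_filter, Finset.mem_Ico] at hn
        obtain ⟨⟨hnt, hn2t⟩, hrec⟩ := hn
        rw [Finset.mem_Ico]
        constructor
        · have h1 : n - t + t = n := by omega
          have h2 := hWt (n - t)
          rw [h1] at h2
          have h3 := hj₀min (n - t) (by omega)
          omega
        · have := hrec j₀ (Finset.mem_range.2 (by omega))
          omega
      · intro v hv
        rw [Finset.mem_Ico] at hv
        have hv0 : v ≤ 0 := by omega
        have heq := hit_eq v hv0
        rw [hR, Finset.mem_filter, Finset.mem_Ico]
        have h1 : t ≤ hit v := by
          by_contra h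
          push_neg at h
          have := hj₀min (hit v) h
          omega
        have h2 : hit v < 2 * t := by
          have h3 : W (j₀ + t) = μ - m := by rw [hWt]
          have h4 : hit v ≤ j₀ + t := Nat.find_min' (hexAll v) (by omega)
          omega
        refine ⟨⟨h1, h2⟩, fun j hj => ?_⟩
        rw [Finset.mem_range] at hj
        have := hit_min v j hj
        omega
      · intro n hn
        rw [hR, Finset.mem_filter, Finset.mem_Ico] at hn
        obtain ⟨⟨hnt, hn2t⟩, hrec⟩ := hn
        have h1 : hit (W n) ≤ n := Nat.find_min' (hexAll (W n)) le_rfl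
        rcases lt_or_eq_of_le h1 with h | h
        · exfalso
          have h2 := hrec _ (Finset.mem_range.2 h)
          have h3 := hit_le (W n)
          omega
        · exact h
      · intro v hv
        rw [Finset.mem_Ico] at hv
        exact hit_eq v (by omega)
    rw [this, Int.card_Ico]
    omega
  rw [← hcardR]
  apply Finset.card_bij' (fun r _ => r + t) (fun n _ => n - t)
  · intro r hr
    simp only [Finset.mem_filter, Finset.mem_range] at hr
    obtain ⟨hrt, hgood⟩ := hr
    rw [hR, Finset.mem_filter, Finset.mem_Ico]
    refine ⟨⟨by omega, by omega⟩, ?_⟩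
    have hwin : ∀ n, r ≤ n → n < r + t → W r - m < W n := by
      apply skipfree W hstep (W r - m) r (r + t) (by omega)
      intro n hn1 hn2 hne
      have hs : n - r ∈ Finset.Icc 1 (t - 1) := Finset.mem_Icc.2 (by omega)
      apply hgood (n - r) hs
      have h1 : r + (n - r) = n := by omega
      have h2 := hshift r (n - r)
      rw [h1] at h2
      omega
    intro j hj
    rw [Finset.mem_range] at hj
    have hrt' : W (r + t) = W r - m := hWt r
    rcases le_or_gt r j with h | h
    · have := hwin j h hj
      omega
    · have h1 := hWt j
      have h2 := hwin (j + t) (by omega) (by omega)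
      omega
  · intro n hn
    rw [hR, Finset.mem_filter, Finset.mem_Ico] at hn
    obtain ⟨⟨hnt, hn2t⟩, hrec⟩ := hn
    simp only [Finset.mem_filter, Finset.mem_range]
    refine ⟨by omega, ?_⟩
    intro s hs hcon
    rw [Finset.mem_Icc] at hs
    have h1 := hshift (n - t) s
    have h2 := hWt (n - t)
    have h3 : n - t + t = n := by omega
    rw [h3] at h2
    have h4 := hrec (n - t + s) (Finset.mem_range.2 (by omega))
    omega
  · intro r hr
    simp only [Finset.mem_filter, Finset.mem_range] at hr
    omega
  · intro n hn
    rw [hR, Finset.mem_filter, Finset.mem_Ico] at hn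
    omega

lemma mod_rot (t a b c q : ℕ) (ht : 0 < t) (ha : a < t) (h : b + c = t * q) :
    ((a + b) % t + c) % t = a := by
  rw [Nat.mod_add_mod]
  have h2 : a + b + c = a + t * q := by omega
  rw [h2, Nat.add_mul_mod_self_left, Nat.mod_eq_of_lt ha]

def rotE (t r : ℕ) (ht : 0 < t) : Fin t ≃ Fin t where
  toFun j := ⟨(j.1 + r) % t, Nat.mod_lt _ ht⟩
  invFun j := ⟨(j.1 + (t - r % t)) % t, Nat.mod_lt _ ht⟩
  left_inv j := by
    apply Fin.ext
    exact mod_rot t j.1 r (t - r % t) (r / t + 1) ht j.2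
      (by have h1 := Nat.div_add_mod r t; have h2 := Nat.mod_lt r ht
          have h3 : t * (r / t + 1) = t * (r / t) + t := Nat.mul_succ t _
          omega)
  right_inv j := by
    apply Fin.ext
    exact mod_rot t j.1 (t - r % t) r (r / t + 1) ht j.2
      (by have h1 := Nat.div_add_mod r t; have h2 := Nat.mod_lt r ht
          have h3 : t * (r / t + 1) = t * (r / t) + t := Nat.mul_succ t _
          omega)

end Stmt16Aux

/-- random walk hitting time theorem: let `S_t = k + ∑_{j=1}^t ξ_j`
with `(ξ_j)` i.i.d. integer-valued, `ξ_j ≥ -1` (downward skip-free), `k ≥ 0`, and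
let `T = inf{s ≥ 1 : S_s = -1}`. Then for `t ≥ 1`,
`P(T = t) = ((k+1)/t) · P(S_t = -1)`. -/
theorem stmt_16 {Ω : Type*} [MeasurableSpace Ω] (P : Measure Ω) [IsProbabilityMeasure P]
    (ξ : ℕ → Ω → ℤ) (hξm : ∀ j, Measurable (ξ j))
    (hindep : iIndepFun ξ P)
    (hident : ∀ i j, Measure.map (ξ i) P = Measure.map (ξ j) P)
    (hlb : ∀ j ω, -1 ≤ ξ j ω)
    (k : ℕ) (S : ℕ → Ω → ℤ)
    (hS : ∀ t ω, S t ω = (k : ℤ) + ∑ j ∈ Finset.Icc 1 t, ξ j ω)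
    (t : ℕ) (ht : 1 ≤ t) :
    (P {ω | S t ω = -1 ∧ ∀ s ∈ Finset.Icc 1 (t - 1), S s ω ≠ -1}).toReal
      = ((k + 1 : ℝ) / t) * (P {ω | S t ω = -1}).toReal := by
  classical
  have ht0 : 0 < t := ht
  set m : ℕ := k + 1 with hmdef
  have hm : 0 < m := by omega
  set μ := Measure.map (ξ 1) P with hμdef
  have hμj : ∀ j, Measure.map (ξ j) P = μ := fun j => hident j 1
  have hprob : IsProbabilityMeasure μ := Measure.isProbabilityMeasure_map (hξm 1).aemeasurable
  set Φ : Ω → (Fin t → ℤ) := fun ω j => ξ (j.1 + 1) ω with hΦdef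
  have hΦm : Measurable Φ := measurable_pi_lambda _ fun j => hξm _
  -- the joint law is the iid product measure
  have hjoint : Measure.map Φ P = Measure.pi (fun _ : Fin t => μ) := by
    refine (Measure.pi_eq fun s hs => ?_).symm
    rw [Measure.map_apply hΦm (MeasurableSet.univ_pi hs)]
    set sets : ℕ → Set ℤ := fun n => if h : 1 ≤ n ∧ n ≤ t then s ⟨n - 1, by omega⟩ else Set.univ
      with hsets
    have hsetsm : ∀ n, MeasurableSet (sets n) := by
      intro n
      simp only [hsets]
      split
      · exact hs _
      · exact MeasurableSet.univ
    have hsets_eq : ∀ j : Fin t, sets (j.1 + 1) = s j := by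
      intro j
      have hj : 1 ≤ j.1 + 1 ∧ j.1 + 1 ≤ t := ⟨by omega, by omega⟩
      simp only [hsets, dif_pos hj]
      exact congrArg s (Fin.ext (show j.1 + 1 - 1 = j.1 by omega))
    have hpre : Φ ⁻¹' Set.pi Set.univ s = ⋂ n ∈ Finset.Icc 1 t, ξ n ⁻¹' sets n := by
      ext ω
      simp only [Set.mem_preimage, Set.mem_pi, Set.mem_univ, forall_true_left, Set.mem_iInter,
        Finset.mem_Icc]
      constructor
      · rintro h n ⟨hn1, hn2⟩
        have h1 : n - 1 < t := by omega
        have h2 : sets n = s ⟨n - 1, h1⟩ := by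
          simp only [hsets, dif_pos (And.intro hn1 hn2)]
        rw [h2]
        have h4 : n - 1 + 1 = n := by omega
        have h5 : ξ n ω = ξ (n - 1 + 1) ω := by rw [h4]
        rw [h5]
        exact h ⟨n - 1, h1⟩
      · intro h j
        have h2 := h (j.1 + 1) ⟨by omega, by omega⟩
        rw [hsets_eq j] at h2
        exact h2
    rw [hpre, hindep.measure_inter_preimage_eq_mul (Finset.Icc 1 t) (fun n _ => hsetsm n)]
    have hmarg : ∀ n, P (ξ n ⁻¹' sets n) = μ (sets n) := by
      intro n
      rw [← hμj n, Measure.map_apply (hξm n) (hsetsm n)]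
    rw [Finset.prod_congr rfl fun n _ => hmarg n]
    calc ∏ n ∈ Finset.Icc 1 t, μ (sets n)
        = ∏ i ∈ Finset.range t, μ (sets (1 + i)) := by
          rw [← Finset.Ico_add_one_right_eq_Icc, Finset.prod_Ico_eq_prod_range]
          norm_num
      _ = ∏ i ∈ Finset.range t, μ (sets (i + 1)) :=
          Finset.prod_congr rfl fun i _ => by rw [Nat.add_comm]
      _ = ∏ j : Fin t, μ (sets (j.1 + 1)) :=
          (Fin.prod_univ_eq_prod_range (fun i => μ (sets (i + 1))) t).symm
      _ = ∏ j : Fin t, μ (s j) := Finset.prod_congr rfl fun j _ => by rw [hsets_eq j]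
  -- rotation invariance of the product measure
  have hrotinv : ∀ r : ℕ,
      Measure.map (fun g : Fin t → ℤ => g ∘ (Stmt16Aux.rotE t r ht0))
          (Measure.pi fun _ : Fin t => μ)
        = Measure.pi (fun _ : Fin t => μ) := by
    intro r
    have hme : Measurable (fun g : Fin t → ℤ => g ∘ (Stmt16Aux.rotE t r ht0)) :=
      measurable_pi_lambda _ fun j => measurable_pi_apply _
    refine (Measure.pi_eq fun s hs => ?_).symm
    rw [Measure.map_apply hme (MeasurableSet.univ_pi hs)]
    have hpre : (fun g : Fin t → ℤ => g ∘ (Stmt16Aux.rotE t r ht0)) ⁻¹' Set.pi Set.univ s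
        = Set.pi Set.univ (fun i => s ((Stmt16Aux.rotE t r ht0).symm i)) := by
      ext g
      simp only [Set.mem_preimage, Set.mem_pi, Set.mem_univ, forall_true_left,
        Function.comp_apply]
      constructor
      · intro h i
        have := h ((Stmt16Aux.rotE t r ht0).symm i)
        rwa [Equiv.apply_symm_apply] at this
      · intro h j
        have := h ((Stmt16Aux.rotE t r ht0) j)
        rwa [Equiv.symm_apply_apply] at this
    rw [hpre, Measure.pi_pi]
    exact Equiv.prod_comp (Stmt16Aux.rotE t r ht0).symm (fun j => μ (s j))
  -- the cyclic-rotation events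
  set B : ℕ → Set (Fin t → ℤ) := fun r =>
    {g | (∑ j, g j) = -(m : ℤ) ∧ ∀ s ∈ Finset.Icc 1 (t - 1),
        (∑ i ∈ Finset.range s, g ⟨(r + i) % t, Nat.mod_lt _ ht0⟩) ≠ -(m : ℤ)} with hBdef
  have hBm : ∀ r, MeasurableSet (B r) := by
    intro r
    have h1 : MeasurableSet {g : Fin t → ℤ | (∑ j, g j) = -(m : ℤ)} := by
      have hf : Measurable fun g : Fin t → ℤ => ∑ j, g j :=
        Finset.measurable_sum Finset.univ fun j _ => measurable_pi_apply j
      exact hf (measurableSet_singleton (-(m : ℤ)))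
    have h2 : ∀ s : ℕ, MeasurableSet {g : Fin t → ℤ |
        (∑ i ∈ Finset.range s, g ⟨(r + i) % t, Nat.mod_lt _ ht0⟩) = -(m : ℤ)} := by
      intro s
      have hf : Measurable fun g : Fin t → ℤ =>
          ∑ i ∈ Finset.range s, g ⟨(r + i) % t, Nat.mod_lt _ ht0⟩ :=
        Finset.measurable_sum _ fun i _ => measurable_pi_apply _
      exact hf (measurableSet_singleton _)
    have heq : B r = {g : Fin t → ℤ | (∑ j, g j) = -(m : ℤ)} ∩
        ⋂ s ∈ Finset.Icc 1 (t - 1), ({g : Fin t → ℤ |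
          (∑ i ∈ Finset.range s, g ⟨(r + i) % t, Nat.mod_lt _ ht0⟩) = -(m : ℤ)})ᶜ := by
      ext g
      simp only [hBdef, Set.mem_setOf_eq, Set.mem_inter_iff, Set.mem_iInter,
        Set.mem_compl_iff]
    rw [heq]
    exact h1.inter (MeasurableSet.biInter (Finset.Icc 1 (t - 1)).countable_toSet
      fun s _ => (h2 s).compl)
  have hIccRange : ∀ (s : ℕ) (ω : Ω),
      ∑ j ∈ Finset.Icc 1 s, ξ j ω = ∑ i ∈ Finset.range s, ξ (i + 1) ω := by
    intro s ω
    rw [← Finset.Ico_add_one_right_eq_Icc, Finset.sum_Ico_eq_sum_range]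
    have h1 : s + 1 - 1 = s := by omega
    rw [h1]
    exact Finset.sum_congr rfl fun i _ => by rw [Nat.add_comm]
  have htotiff : ∀ ω : Ω, ((∑ j : Fin t, Φ ω j) = -(m : ℤ)) ↔ S t ω = -1 := by
    intro ω
    have h4 : (∑ j : Fin t, Φ ω j) = ∑ i ∈ Finset.range t, ξ (i + 1) ω :=
      Fin.sum_univ_eq_sum_range (fun i => ξ (i + 1) ω) t
    rw [h4, ← hIccRange t ω]
    have h2 := hS t ω
    omega
  have hBmem : ∀ (ω : Ω) (r : ℕ), ω ∈ Φ ⁻¹' B r ↔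
      (S t ω = -1 ∧ ∀ s ∈ Finset.Icc 1 (t - 1),
        (∑ i ∈ Finset.range s, ξ ((r + i) % t + 1) ω) ≠ -(m : ℤ)) := by
    intro ω r
    rw [Set.mem_preimage]
    simp only [hBdef, Set.mem_setOf_eq]
    rw [htotiff ω]
  have hconv : ∀ ω : Ω, ∀ s ∈ Finset.Icc 1 (t - 1),
      ((∑ i ∈ Finset.range s, ξ ((0 + i) % t + 1) ω) = -(m : ℤ) ↔ S s ω = -1) := by
    intro ω s hs
    rw [Finset.mem_Icc] at hs
    have e1 : (∑ i ∈ Finset.range s, ξ ((0 + i) % t + 1) ω)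
        = ∑ i ∈ Finset.range s, ξ (i + 1) ω := by
      refine Finset.sum_congr rfl fun i hi => ?_
      rw [Finset.mem_range] at hi
      have h5 : (0 + i) % t = i := by
        rw [Nat.zero_add]
        exact Nat.mod_eq_of_lt (by omega)
      rw [h5]
    rw [e1, ← hIccRange s ω]
    have h2 := hS s ω
    omega
  have hA0 : {ω | S t ω = -1 ∧ ∀ s ∈ Finset.Icc 1 (t - 1), S s ω ≠ -1} = Φ ⁻¹' B 0 := by
    ext ω
    rw [Set.mem_setOf_eq, hBmem ω 0]
    exact and_congr_right fun _ =>
      forall₂_congr fun s hs => (not_congr (hconv ω s hs)).symm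
  set C : Set Ω := {ω | S t ω = -1} with hCdef
  have hSm : ∀ u, Measurable (S u) := by
    intro u
    have h1 : S u = fun ω => (k : ℤ) + ∑ j ∈ Finset.Icc 1 u, ξ j ω := funext fun ω => hS u ω
    rw [h1]
    exact measurable_const.add (Finset.measurable_sum _ fun j _ => hξm j)
  have hCm : MeasurableSet C := hSm t (measurableSet_singleton (-1))
  -- pointwise counting via the cycle lemma
  have hpoint : ∀ ω : Ω, (∑ r ∈ Finset.range t, Set.indicator (Φ ⁻¹' B r) (1 : Ω → ℝ≥0∞) ω)
      = (m : ℝ≥0∞) * Set.indicator C (1 : Ω → ℝ≥0∞) ω := by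
    intro ω
    by_cases hC : ω ∈ C
    · have hCs : S t ω = -1 := hC
      rw [Set.indicator_of_mem hC, Pi.one_apply, mul_one]
      have hy : ∀ i : ℕ, (-1 : ℤ) ≤ (fun i => ξ (i % t + 1) ω) i := fun i => hlb _ ω
      have hyper : ∀ i : ℕ,
          (fun i => ξ (i % t + 1) ω) (i + t) = (fun i => ξ (i % t + 1) ω) i := by
        intro i
        simp only
        rw [Nat.add_mod_right]
      have hysum : (∑ i ∈ Finset.range t, (fun i => ξ (i % t + 1) ω) i) = -(m : ℤ) := by
        simp only
        have e1 : ∀ i ∈ Finset.range t, ξ (i % t + 1) ω = ξ (i + 1) ω := by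
          intro i hi
          rw [Finset.mem_range] at hi
          rw [Nat.mod_eq_of_lt hi]
        rw [Finset.sum_congr rfl e1, ← hIccRange t ω]
        have h2 := hS t ω
        omega
      have hcard := Stmt16Aux.cycle_count t m ht0 hm _ hy hyper hysum
      calc (∑ r ∈ Finset.range t, Set.indicator (Φ ⁻¹' B r) (1 : Ω → ℝ≥0∞) ω)
          = ∑ r ∈ Finset.range t, if ω ∈ Φ ⁻¹' B r then (1 : ℝ≥0∞) else 0 := by
            refine Finset.sum_congr rfl fun r _ => ?_
            rw [Set.indicator_apply]
            simp
        _ = (((Finset.range t).filter (fun r => ω ∈ Φ ⁻¹' B r)).card : ℝ≥0∞) :=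
            Finset.sum_boole _ _
        _ = (m : ℝ≥0∞) := by
            have hfe : (Finset.range t).filter (fun r => ω ∈ Φ ⁻¹' B r)
                = (Finset.range t).filter (fun r => ∀ s ∈ Finset.Icc 1 (t - 1),
                    (∑ i ∈ Finset.range s, (fun i => ξ (i % t + 1) ω) (r + i)) ≠ -(m : ℤ)) := by
              ext r; simp only [Finset.mem_filter]; refine and_congr_right fun _ => ?_
              rw [hBmem ω r]
              constructor
              · exact fun h => h.2
              · exact fun h => ⟨hCs, h⟩
            rw [hfe, hcard]
    · rw [Set.indicator_of_notMem hC, mul_zero]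
      refine Finset.sum_eq_zero fun r _ => ?_
      have hnot : ω ∉ Φ ⁻¹' B r := by
        intro hmem
        rw [hBmem ω r] at hmem
        exact hC hmem.1
      rw [Set.indicator_of_notMem hnot]
  have hsum_meas : (∑ r ∈ Finset.range t, P (Φ ⁻¹' B r)) = (m : ℝ≥0∞) * P C := by
    calc (∑ r ∈ Finset.range t, P (Φ ⁻¹' B r))
        = ∑ r ∈ Finset.range t, ∫⁻ ω, Set.indicator (Φ ⁻¹' B r) (1 : Ω → ℝ≥0∞) ω ∂P :=
          Finset.sum_congr rfl fun r _ => (lintegral_indicator_one (hΦm (hBm r))).symm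
      _ = ∫⁻ ω, (∑ r ∈ Finset.range t, Set.indicator (Φ ⁻¹' B r) (1 : Ω → ℝ≥0∞) ω) ∂P :=
          (lintegral_finset_sum _ fun r _ => measurable_one.indicator (hΦm (hBm r))).symm
      _ = ∫⁻ ω, (m : ℝ≥0∞) * Set.indicator C (1 : Ω → ℝ≥0∞) ω ∂P := lintegral_congr hpoint
      _ = (m : ℝ≥0∞) * ∫⁻ ω, Set.indicator C (1 : Ω → ℝ≥0∞) ω ∂P :=
          lintegral_const_mul _ (measurable_one.indicator hCm)
      _ = (m : ℝ≥0∞) * P C := by rw [lintegral_indicator_one hCm]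
  -- rotation identity between the events
  have hBrot : ∀ r : ℕ, B r = (fun g : Fin t → ℤ => g ∘ (Stmt16Aux.rotE t r ht0)) ⁻¹' B 0 := by
    intro r
    ext g
    simp only [hBdef, Set.mem_setOf_eq, Set.mem_preimage]
    have hc1 : (∑ j, (g ∘ (Stmt16Aux.rotE t r ht0)) j) = ∑ j, g j :=
      Equiv.sum_comp (Stmt16Aux.rotE t r ht0) g
    have hc2 : ∀ s : ℕ,
        (∑ i ∈ Finset.range s, (g ∘ (Stmt16Aux.rotE t r ht0)) ⟨(0 + i) % t, Nat.mod_lt _ ht0⟩)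
          = ∑ i ∈ Finset.range s, g ⟨(r + i) % t, Nat.mod_lt _ ht0⟩ := by
      intro s
      refine Finset.sum_congr rfl fun i _ => ?_
      show g ((Stmt16Aux.rotE t r ht0) ⟨(0 + i) % t, Nat.mod_lt _ ht0⟩) = _
      refine congrArg g (Fin.ext ?_)
      show ((0 + i) % t + r) % t = (r + i) % t
      rw [Nat.zero_add, Nat.mod_add_mod, Nat.add_comm]
    constructor
    · rintro ⟨h1, h2⟩
      refine ⟨by rw [hc1]; exact h1, fun s hs => ?_⟩
      rw [hc2 s]
      exact h2 s hs
    · rintro ⟨h1, h2⟩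
      refine ⟨by rw [hc1] at h1; exact h1, fun s hs => ?_⟩
      have := h2 s hs
      rw [hc2 s] at this
      exact this
  have hrotm : ∀ r : ℕ, Measurable (fun g : Fin t → ℤ => g ∘ (Stmt16Aux.rotE t r ht0)) :=
    fun r => measurable_pi_lambda _ fun j => measurable_pi_apply _
  have hAr : ∀ r, P (Φ ⁻¹' B r) = P (Φ ⁻¹' B 0) := by
    intro r
    rw [← Measure.map_apply hΦm (hBm r), ← Measure.map_apply hΦm (hBm 0), hjoint,
      hBrot r, ← Measure.map_apply (hrotm r) (hBm 0), hrotinv r]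
  have hkey : (t : ℝ≥0∞) * P (Φ ⁻¹' B 0) = (m : ℝ≥0∞) * P C := by
    rw [← hsum_meas, Finset.sum_congr rfl fun r _ => hAr r, Finset.sum_const,
      Finset.card_range, nsmul_eq_mul]
  rw [hA0]
  have hreal := congrArg ENNReal.toReal hkey
  rw [ENNReal.toReal_mul, ENNReal.toReal_mul, ENNReal.toReal_natCast, ENNReal.toReal_natCast]
    at hreal
  have htne : (t : ℝ) ≠ 0 := Nat.cast_ne_zero.mpr (by omega)
  have hmr : ((m : ℕ) : ℝ) = (k : ℝ) + 1 := by rw [hmdef]; push_cast; ring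
  rw [hmr] at hreal
  field_simp
  linarith [hreal]
end
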